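/- Let f : ℝ² → ℝ be twice continuously differentiable with ∂²f/∂x∂y ≡ 0 on a convex open set containing [0,1]², and suppose f is skew-symmetric (f(α,β) = -f(β,α)) with f(α,0) = -dα. Then f(α,β) = d(β-α) for all α, β ∈ [0,1]. -/

import Mathlib

/-!
A vanishing mixed partial makes `x ↦ ∂f/∂y (x, y)` constant, so `∂f/∂y (x, y) = ∂f/∂y (0, y)` and
`f (x, y) = f (x, 0) + f (0, y) - f (0, 0)` on the square. Skew-symmetry gives `f (0, 0) = 0` and
`f (0, y) = -f (y, 0) = d y`, and the boundary condition gives `f (x, 0) = -d x`.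
-/

open Set

variable {E : Type*} [NormedAddCommGroup E] [NormedSpace ℝ E]

theorem eq_of_hasDerivAt_zero_on_Icc {g : ℝ → E} {a b : ℝ}
    (hg : ∀ x ∈ Icc a b, HasDerivAt g 0 x) : ∀ x ∈ Icc a b, g x = g a :=
  constant_of_has_deriv_right_zero (fun x hx => (hg x hx).continuousAt.continuousWithinAt)
    fun x hx => (hg x (Ico_subset_Icc_self hx)).hasDerivWithinAt

section Partial

variable {f : ℝ → ℝ → E} {U : Set (ℝ × ℝ)}

theorem hasDerivAt_snd_of_differentiableAt {x y : ℝ}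
    (hf : DifferentiableAt ℝ (fun p : ℝ × ℝ => f p.1 p.2) (x, y)) :
    HasDerivAt (f x) (fderiv ℝ (fun p : ℝ × ℝ => f p.1 p.2) (x, y) (0, 1)) y :=
  hf.hasFDerivAt.comp_hasDerivAt (x := y) (f := fun t => ((x, t) : ℝ × ℝ))
    ((hasDerivAt_const y x).prodMk (hasDerivAt_id y))

theorem differentiableAt_deriv_snd (hU : IsOpen U)
    (hf : ContDiffOn ℝ 2 (fun p : ℝ × ℝ => f p.1 p.2) U) {x y : ℝ} (hxy : (x, y) ∈ U) :
    DifferentiableAt ℝ (fun x' => deriv (f x') y) x := by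
  set F : ℝ × ℝ → E := fun p => f p.1 p.2
  have hF : DifferentiableOn ℝ F U := hf.differentiableOn two_ne_zero
  have hDF : DifferentiableAt ℝ (fderiv ℝ F) (x, y) :=
    ((hf.fderiv_of_isOpen hU le_rfl).differentiableOn one_ne_zero).differentiableAt
      (hU.mem_nhds hxy)
  have hline : Continuous fun x' : ℝ => ((x', y) : ℝ × ℝ) := continuous_id.prodMk continuous_const
  have hpartial : DifferentiableAt ℝ (fun x' => fderiv ℝ F (x', y) (0, 1)) x :=
    (hDF.comp x (differentiableAt_id.prodMk (differentiableAt_const y))).clm_apply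
      (differentiableAt_const _)
  refine hpartial.congr_of_eventuallyEq ?_
  filter_upwards [(hU.preimage hline).mem_nhds hxy] with x' hx'
  exact (hasDerivAt_snd_of_differentiableAt (hF.differentiableAt (hU.mem_nhds hx'))).deriv

variable {a b c e : ℝ}

theorem deriv_snd_eq_of_mixed_zero (hU : IsOpen U)
    (hf : ContDiffOn ℝ 2 (fun p : ℝ × ℝ => f p.1 p.2) U)
    (hmixed : ∀ p ∈ U, deriv (fun x => deriv (fun y => f x y) p.2) p.1 = 0)
    (hR : Icc a b ×ˢ Icc c e ⊆ U) {y : ℝ} (hy : y ∈ Icc c e) :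
    ∀ x ∈ Icc a b, deriv (f x) y = deriv (f a) y :=
  eq_of_hasDerivAt_zero_on_Icc fun x hx => by
    have hxy : (x, y) ∈ U := hR ⟨hx, hy⟩
    simpa only [hmixed _ hxy] using (differentiableAt_deriv_snd hU hf hxy).hasDerivAt

theorem eq_add_sub_of_mixed_zero (hU : IsOpen U)
    (hf : ContDiffOn ℝ 2 (fun p : ℝ × ℝ => f p.1 p.2) U)
    (hmixed : ∀ p ∈ U, deriv (fun x => deriv (fun y => f x y) p.2) p.1 = 0)
    (hR : Icc a b ×ˢ Icc c e ⊆ U) {x y : ℝ} (hx : x ∈ Icc a b) (hy : y ∈ Icc c e) :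
    f x y = f x c + f a y - f a c := by
  have hpartial : ∀ x' ∈ Icc a b, ∀ t ∈ Icc c e, HasDerivAt (f x') (deriv (f x') t) t :=
    fun x' hx' t ht => (hasDerivAt_snd_of_differentiableAt
      ((hf.differentiableOn two_ne_zero).differentiableAt (hU.mem_nhds (hR ⟨hx', ht⟩))))
      |>.differentiableAt.hasDerivAt
  have hdiff : ∀ t ∈ Icc c e, HasDerivAt (f x - f a) 0 t := fun t ht => by
    simpa only [deriv_snd_eq_of_mixed_zero hU hf hmixed hR ht x hx, sub_self] using
      (hpartial x hx t ht).sub (hpartial a (left_mem_Icc.2 (hx.1.trans hx.2)) t ht)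
  have hconst : f x y - f a y = f x c - f a c := eq_of_hasDerivAt_zero_on_Icc hdiff y hy
  rw [add_sub_right_comm, ← hconst]
  abel

end Partial

theorem stmt_15_general (d : ℝ) (f : ℝ → ℝ → ℝ) (U : Set (ℝ × ℝ))
    (hUopen : IsOpen U)
    (hUsub : Icc ((0:ℝ), (0:ℝ)) (1, 1) ⊆ U)
    (hf : ContDiffOn ℝ 2 (fun p : ℝ × ℝ => f p.1 p.2) U)
    (hmixed : ∀ p ∈ U, deriv (fun x => deriv (fun y => f x y) p.2) p.1 = 0)
    (hskew : ∀ α β : ℝ, f α β = -f β α)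
    (hbdy : ∀ α : ℝ, f α 0 = -d * α) :
    ∀ α ∈ Icc (0:ℝ) 1, ∀ β ∈ Icc (0:ℝ) 1, f α β = d * (β - α) := by
  intro α hα β hβ
  rw [Icc_prod_eq] at hUsub
  have h00 : f 0 0 = 0 := by linarith [hskew 0 0]
  have h0β : f 0 β = d * β := by linarith [hskew 0 β, hbdy β]
  rw [eq_add_sub_of_mixed_zero hUopen hf hmixed hUsub hα hβ, hbdy, h0β, h00]
  ring

/-- Let `f : ℝ² → ℝ` be twice continuously differentiable on a convex open set
containing `[0,1]²`, with vanishing mixed partial `∂²f/∂x∂y`, skew-symmetric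
(`f(α,β) = -f(β,α)`), and `f(α,0) = -dα`. Then `f(α,β) = d(β-α)` on `[0,1]²`. -/
theorem stmt_15 (d : ℝ) (f : ℝ → ℝ → ℝ) (U : Set (ℝ × ℝ))
    (hUopen : IsOpen U) (hUconv : Convex ℝ U)
    (hUsub : Icc ((0:ℝ), (0:ℝ)) (1, 1) ⊆ U)
    (hf : ContDiffOn ℝ 2 (fun p : ℝ × ℝ => f p.1 p.2) U)
    (hmixed : ∀ p ∈ U, deriv (fun x => deriv (fun y => f x y) p.2) p.1 = 0)
    (hskew : ∀ α β : ℝ, f α β = -f β α)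
    (hbdy : ∀ α : ℝ, f α 0 = -d * α) :
    ∀ α ∈ Icc (0:ℝ) 1, ∀ β ∈ Icc (0:ℝ) 1, f α β = d * (β - α) :=
  stmt_15_general d f U hUopen hUsub hf hmixed hskew hbdy
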